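/- arXiv:1411.5461 — 5 statements merged into one kernel-verified Lean document; each statement's English description precedes it below -/
import Mathlib

section
/- For all P > 0, N1, N3 > 0 with N1 ≤ N3, and all γ, η ∈ [0,1]: if C(γP/N1) − C(γP/N3) = C(ηP/((1-η)P+N1)) − C(ηP/((1-η)P+N3)) and this common value is strictly positive, then C(γP/N3) ≤ C(ηP/((1-η)P+N3)), where C(t) = (1/2)·log(1+t). -/
noncomputable def C (t : ℝ) : ℝ := (1/2) * Real.log (1 + t)

theorem stmt_6 (P N1 N3 γ η : ℝ) (hP : 0 < P) (hN1 : 0 < N1) (hN3 : 0 < N3)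
    (hN13 : N1 ≤ N3) (hγ : γ ∈ Set.Icc (0:ℝ) 1) (hη : η ∈ Set.Icc (0:ℝ) 1)
    (heq : C (γ * P / N1) - C (γ * P / N3)
        = C (η * P / ((1 - η) * P + N1)) - C (η * P / ((1 - η) * P + N3)))
    (hpos : 0 < C (γ * P / N1) - C (γ * P / N3)) :
    C (γ * P / N3) ≤ C (η * P / ((1 - η) * P + N3)) := by
  obtain ⟨hγ0, hγ1⟩ := hγ
  obtain ⟨hη0, hη1⟩ := hη
  set A := γ * P with hA
  set B := η * P with hB
  set M1 := (1 - η) * P + N1 with hM1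
  set M3 := (1 - η) * P + N3 with hM3
  have hA0 : 0 ≤ A := mul_nonneg hγ0 hP.le
  have hB0 : 0 ≤ B := mul_nonneg hη0 hP.le
  have hs : 0 ≤ (1 - η) * P := mul_nonneg (by linarith) hP.le
  have hM1pos : 0 < M1 := by simp only [hM1]; linarith
  have hM3pos : 0 < M3 := by simp only [hM3]; linarith
  have h1 : 0 < 1 + A / N1 := by positivity
  have h2 : 0 < 1 + A / N3 := by positivity
  have h3 : 0 < 1 + B / M1 := by positivity
  have h4 : 0 < 1 + B / M3 := by positivity
  -- from hpos : A > 0 and N1 < N3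
  have hlogpos : Real.log (1 + A / N3) < Real.log (1 + A / N1) := by
    have := hpos
    simp only [C] at this
    linarith
  have hargs : A / N3 < A / N1 := by
    have := (Real.log_lt_log_iff h2 h1).mp hlogpos
    linarith
  have hApos : 0 < A := by
    by_contra h
    push_neg at h
    have hA0' : A = 0 := le_antisymm h hA0
    rw [hA0'] at hargs; simp at hargs
  have hN1lt : N1 < N3 := by
    by_contra h
    push_neg at h
    have : N1 = N3 := le_antisymm hN13 h
    rw [this] at hargs; linarith
  -- product equality from heq
  have hlogeq : Real.log (1 + A / N1) + Real.log (1 + B / M3)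
      = Real.log (1 + B / M1) + Real.log (1 + A / N3) := by
    simp only [C] at heq; linarith
  have hmul : (1 + A / N1) * (1 + B / M3) = (1 + B / M1) * (1 + A / N3) := by
    have := hlogeq
    rw [← Real.log_mul (ne_of_gt h1) (ne_of_gt h4),
        ← Real.log_mul (ne_of_gt h3) (ne_of_gt h2)] at this
    exact Real.log_injOn_pos (Set.mem_Ioi.mpr (by positivity))
      (Set.mem_Ioi.mpr (by positivity)) this
  have hpoly : (N1 + A) * (M3 + B) * (M1 * N3) = (M1 + B) * (N3 + A) * (N1 * M3) := by
    field_simp at hmul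
    linear_combination hmul
  -- key: A * M1 * (M3 + B) = B * N1 * (N3 + A)
  have hkey : A * M1 * (M3 + B) = B * N1 * (N3 + A) := by
    have hd : 0 < N3 - N1 := by linarith
    have hfact : (N3 - N1) * (A * M1 * (M3 + B) - B * N1 * (N3 + A)) = 0 := by
      simp only [hM1, hM3] at hpoly ⊢
      linear_combination hpoly
    have := mul_eq_zero.mp hfact
    rcases this with h | h
    · linarith
    · linarith
  -- conclude A * M3 ≤ B * N3
  have hN1M1 : N1 ≤ M1 := by simp only [hM1]; linarith
  have hfin : A * M3 ≤ B * N3 := by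
    nlinarith [mul_nonneg (mul_nonneg hA0 hB0) (sub_nonneg.mpr hN1M1),
      mul_pos hApos hM3pos, mul_pos hN1 hN3]
  have hdiv : A / N3 ≤ B / M3 := (div_le_div_iff₀ hN3 hM3pos).mpr hfin
  simp only [C]
  have : Real.log (1 + A / N3) ≤ Real.log (1 + B / M3) :=
    Real.log_le_log (by linarith) (by linarith)
  linarith
end

section
/- For all P > 0, 0 < N1 ≤ N2, and 0 ≤ α ≤ 1: C(αP/N1) + C((1-α)P/(αP + N2)) ≤ C(P/N1), where C(t) = (1/2)·log(1+t). -/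
theorem C_le_C {a b : ℝ} (ha : -1 < a) (hab : a ≤ b) : C a ≤ C b := by
  unfold C
  gcongr
  linarith

theorem C_add_C_div {S T N : ℝ} (hN : N ≠ 0) (hSN : S + N ≠ 0) (hSTN : S + T + N ≠ 0) :
    C (S / N) + C (T / (S + N)) = C ((S + T) / N) := by
  have h₁ : 1 + S / N = (S + N) / N := by field_simp; ring
  have h₂ : 1 + T / (S + N) = (S + T + N) / (S + N) := by field_simp; ring
  have h₃ : 1 + (S + T) / N = (S + N) / N * ((S + T + N) / (S + N)) := by field_simp; ring
  unfold C
  rw [h₁, h₂, h₃, Real.log_mul (div_ne_zero hSN hN) (div_ne_zero hSTN hSN)]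
  ring

theorem stmt_8 (P N1 N2 α : ℝ) (hP : 0 < P) (hN1 : 0 < N1) (hN12 : N1 ≤ N2)
    (hα : 0 ≤ α) (hα1 : α ≤ 1) :
    C (α * P / N1) + C ((1 - α) * P / (α * P + N2)) ≤ C (P / N1) := by
  have hS : 0 ≤ α * P := by positivity
  have hT : 0 ≤ (1 - α) * P := mul_nonneg (by linarith) hP.le
  calc C (α * P / N1) + C ((1 - α) * P / (α * P + N2))
      ≤ C (α * P / N1) + C ((1 - α) * P / (α * P + N1)) := by
        gcongr
        exact C_le_C (by linarith [div_nonneg hT (by linarith : 0 ≤ α * P + N2)])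
          (div_le_div_of_nonneg_left hT (by linarith) (by linarith))
    _ = C ((α * P + (1 - α) * P) / N1) := C_add_C_div (by positivity) (by positivity) (by positivity)
    _ = C (P / N1) := by ring_nf
end

section
/- For all P > 0 and 0 < N1 ≤ N2 ≤ N3, and all α1, α2, α3 ≥ 0 with α1+α2+α3 = 1: C(α1P/N1) + C(α2P/(α1P+N2)) + C(α3P/((α1+α2)P+N2)) ≤ C(P/N1), where C(t) = (1/2)·log(1+t). -/
theorem stmt_11 (P N1 N2 N3 α1 α2 α3 : ℝ) (hP : 0 < P) (hN1 : 0 < N1)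
    (hN12 : N1 ≤ N2) (hN23 : N2 ≤ N3)
    (h1 : 0 ≤ α1) (h2 : 0 ≤ α2) (h3 : 0 ≤ α3) (hsum : α1 + α2 + α3 = 1) :
    C (α1 * P / N1) + C (α2 * P / (α1 * P + N2))
        + C (α3 * P / ((α1 + α2) * P + N2)) ≤ C (P / N1) := by
  unfold C
  have hN2 : 0 < N2 := lt_of_lt_of_le hN1 hN12
  have hd2 : 0 < α1 * P + N2 := by positivity
  have hd3 : 0 < (α1 + α2) * P + N2 := by positivity
  have e1 : (0:ℝ) < 1 + α1 * P / N1 := by positivity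
  have e2 : (0:ℝ) < 1 + α2 * P / (α1 * P + N2) := by positivity
  have e3 : (0:ℝ) < 1 + α3 * P / ((α1 + α2) * P + N2) := by positivity
  rw [← mul_add, ← mul_add, ← Real.log_mul (ne_of_gt e1) (ne_of_gt e2),
      ← Real.log_mul (ne_of_gt (mul_pos e1 e2)) (ne_of_gt e3)]
  have hlog : Real.log ((1 + α1 * P / N1) * (1 + α2 * P / (α1 * P + N2)) *
      (1 + α3 * P / ((α1 + α2) * P + N2))) ≤ Real.log (1 + P / N1) := by
    apply Real.log_le_log (by positivity)
    have hα3 : α3 = 1 - α1 - α2 := by linarith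
    subst hα3
    rw [← sub_nonneg]
    have expand : 1 + P / N1 - (1 + α1 * P / N1) * (1 + α2 * P / (α1 * P + N2)) *
        (1 + (1 - α1 - α2) * P / ((α1 + α2) * P + N2)) =
        ((1 - α1) * (N2 - N1) * P * ((α1 + α2) * P + N2)) /
          (N1 * ((α1 * P + N2) * ((α1 + α2) * P + N2))) := by
      field_simp
      ring
    rw [expand]
    apply div_nonneg _ (by positivity)
    apply mul_nonneg (mul_nonneg (mul_nonneg (by linarith) (by linarith)) hP.le) hd3.le
  linarith [hlog]
end

section
/- Let P, N1, N3 > 0 with N1 ≤ N3 and C(t) = (1/2)·log(1+t). Then for every fixed 0 ≤ α ≤ 1, the function β ↦ C(α(1-β)P/(αβP+(1-α)P+N3)) + C(αβP/N3) is nondecreasing in β on [0,1]. -/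
theorem stmt_15 (P N1 N3 α : ℝ) (hP : 0 < P) (hN1 : 0 < N1) (hN3 : 0 < N3)
    (hN13 : N1 ≤ N3) (hα : 0 ≤ α) (hα1 : α ≤ 1) :
    MonotoneOn
      (fun β : ℝ => C (α * (1 - β) * P / (α * β * P + (1 - α) * P + N3))
          + C (α * β * P / N3))
      (Set.Icc 0 1) := by
  have hkey : ∀ x ∈ Set.Icc (0:ℝ) 1,
      C (α * (1 - x) * P / (α * x * P + (1 - α) * P + N3)) + C (α * x * P / N3)
        = (1/2) * Real.log ((P + N3) * (α * x * P + N3)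
            / ((α * x * P + (1 - α) * P + N3) * N3)) := by
    intro x hx
    obtain ⟨hx0, hx1⟩ := hx
    have hD : 0 < α * x * P + (1 - α) * P + N3 := by
      nlinarith [mul_nonneg (mul_nonneg hα hx0) hP.le,
        mul_nonneg (sub_nonneg.2 hα1) hP.le]
    have hn : 0 < α * x * P + N3 := by positivity
    have hPN : 0 < P + N3 := by positivity
    have h1 : 1 + α * (1 - x) * P / (α * x * P + (1 - α) * P + N3)
        = (P + N3) / (α * x * P + (1 - α) * P + N3) := by
      rw [one_add_div hD.ne']; congr 1; ring
    have h2 : 1 + α * x * P / N3 = (α * x * P + N3) / N3 := by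
      field_simp
      ring
    simp only [C, h1, h2]
    rw [← mul_add, Real.log_div hPN.ne' hD.ne', Real.log_div hn.ne' hN3.ne',
        Real.log_div (mul_pos hPN hn).ne' (mul_pos hD hN3).ne',
        Real.log_mul hPN.ne' hn.ne', Real.log_mul hD.ne' hN3.ne']
    ring
  intro x hx y hy hxy
  simp only
  rw [hkey x hx, hkey y hy]
  obtain ⟨hx0, hx1⟩ := hx
  obtain ⟨hy0, hy1⟩ := hy
  have hc : 0 ≤ (1 - α) * P := mul_nonneg (sub_nonneg.2 hα1) hP.le
  have hDx : 0 < α * x * P + (1 - α) * P + N3 := by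
    nlinarith [mul_nonneg (mul_nonneg hα hx0) hP.le]
  have hDy : 0 < α * y * P + (1 - α) * P + N3 := by
    nlinarith [mul_nonneg (mul_nonneg hα hy0) hP.le]
  have hnx : 0 < α * x * P + N3 := by positivity
  have hny : 0 < α * y * P + N3 := by positivity
  have hPN : 0 < P + N3 := by positivity
  gcongr (1/2) * ?_
  apply Real.log_le_log (by positivity)
  rw [div_le_div_iff₀ (by positivity) (by positivity)]
  nlinarith [mul_nonneg (mul_nonneg (mul_pos hPN hN3).le hc)
    (mul_nonneg (mul_nonneg hα hP.le) (sub_nonneg.2 hxy))]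
end

section
/- For P > 0, 0 < N1 < N2, the region {(R1,R2) : ∃ α ∈ [0,1], R1 ≤ C(αP/N1), R2 ≤ C((1-α)P/(αP+N2))}, with C(t) = (1/2)·log(1+t), is strictly contained in the polyhedron {(R1,R2) : R1 ≤ C(P/N1), R2 ≤ C(P/N2), R1+R2 ≤ C(P/N1)}; i.e., there exists a point of the polyhedron not in the region. -/
theorem stmt_17 (P N1 N2 : ℝ) (hP : 0 < P) (hN1 : 0 < N1) (hN12 : N1 < N2) :
    ∃ r : ℝ × ℝ,
      (r.1 ≤ C (P / N1) ∧ r.2 ≤ C (P / N2) ∧ r.1 + r.2 ≤ C (P / N1)) ∧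
      ¬ ∃ α ∈ Set.Icc (0:ℝ) 1,
          r.1 ≤ C (α * P / N1) ∧ r.2 ≤ C ((1 - α) * P / (α * P + N2)) := by
  have hN2 : 0 < N2 := hN1.trans hN12
  have hC2 : 0 ≤ C (P / N2) := by
    have : 0 ≤ P / N2 := by positivity
    have := Real.log_nonneg (by linarith : (1:ℝ) ≤ 1 + P / N2)
    unfold C; linarith
  refine ⟨(C (P / N1) - C (P / N2), C (P / N2)), ⟨by simpa using hC2, le_refl _, by
    simp⟩, ?_⟩
  rintro ⟨α, ⟨hα0, hα1⟩, h1, h2⟩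
  have hden : 0 < α * P + N2 := by nlinarith
  have hq : 0 ≤ (1 - α) * P / (α * P + N2) :=
    div_nonneg (mul_nonneg (by linarith) hP.le) hden.le
  have hp2 : 0 < 1 + P / N2 := by
    have : 0 < P / N2 := by positivity
    linarith
  -- from h2 deduce α = 0
  have hlog2 : Real.log (1 + P / N2) ≤ Real.log (1 + (1 - α) * P / (α * P + N2)) := by
    unfold C at h2; linarith
  have harg2 : 1 + P / N2 ≤ 1 + (1 - α) * P / (α * P + N2) :=
    (Real.log_le_log_iff hp2 (by linarith)).mp hlog2
  have hdiv : P / N2 ≤ (1 - α) * P / (α * P + N2) := by linarith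
  have hmul : P * (α * P + N2) ≤ (1 - α) * P * N2 := by
    rwa [div_le_div_iff₀ hN2 hden] at hdiv
  have hαz : α = 0 := le_antisymm (by nlinarith [mul_pos hP hP, mul_pos hP hN2]) hα0
  subst hαz
  have h0 : C (0 * P / N1) = 0 := by
    norm_num [C]
  rw [h0] at h1
  have hlog1 : Real.log (1 + P / N1) ≤ Real.log (1 + P / N2) := by
    unfold C at h1; linarith
  have hp1 : 0 < 1 + P / N1 := by
    have : 0 < P / N1 := by positivity
    linarith
  have := (Real.log_le_log_iff hp1 hp2).mp hlog1
  have : P / N1 ≤ P / N2 := by linarith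
  rw [div_le_div_iff₀ hN1 hN2] at this
  nlinarith
end
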